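/- Every complete graph K_{k+1} with k odd admits a decomposition of its edge set into (k-1)/2 edge-disjoint Hamilton cycles and one perfect matching, together with a matching containing one edge from each of the (k-1)/2 Hamilton cycles (and no edge of the perfect matching). -/

import Mathlib

/-!
Label the vertices of `K_{2c+2}` by `ZMod (2c+1) ∪ {∞}` and colour an edge `{x, y}` by `x + y` and
an edge `{∞, x}` by `2x`. As `2` is invertible mod `2c+1`, every colour class is a perfect
matching. Walecki's zigzag cycle `∞, i, i+1, i-1, i+2, i-2, …, i+c, i-c, ∞` alternately uses the
colours `2i` and `2i+1`, and at every vertex it has one edge of each of these colours; so its edge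
set is exactly the union of these two colour classes. The cycles for `i < c` and the colour class
of `2c = -1` therefore partition the edges. The edges `{i + 1/4, i + 3/4}` of colour `2i+1` form
the transversal: two of them meet only if `i - j = ±1/2 = ±(c+1)`, impossible for `i, j < c`.
-/

open SimpleGraph

def HasHamiltonDecompositionWithTransversal (V ι : Type*) [DecidableEq V] : Prop :=
  ∃ (C : ι → Σ v : V, (⊤ : SimpleGraph V).Walk v v) (M : (⊤ : SimpleGraph V).Subgraph)
    (T : ι → Sym2 V),
    (∀ i, (C i).2.IsHamiltonianCycle) ∧
    M.IsPerfectMatching ∧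
    (∀ i j, i ≠ j → ∀ e, e ∈ (C i).2.edges → e ∉ (C j).2.edges) ∧
    (∀ i, ∀ e ∈ (C i).2.edges, e ∉ M.edgeSet) ∧
    (∀ e ∈ (⊤ : SimpleGraph V).edgeSet, (∃ i, e ∈ (C i).2.edges) ∨ e ∈ M.edgeSet) ∧
    (∀ i, T i ∈ (C i).2.edges) ∧
    (∀ i, ∀ e ∈ (C i).2.edges, (∃ j, e = T j) → e = T i) ∧
    (∀ i, T i ∉ M.edgeSet) ∧
    (∀ i j, i ≠ j → ∀ x : V, x ∈ T i → x ∉ T j)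

theorem HasHamiltonDecompositionWithTransversal.of_equiv {V W ι : Type*} [DecidableEq V]
    [DecidableEq W] (f : V ≃ W) (h : HasHamiltonDecompositionWithTransversal V ι) :
    HasHamiltonDecompositionWithTransversal W ι := by
  obtain ⟨C, M, T, hC, hM, hCC, hCM, hcover, hTC, hTuniq, hTM, hTT⟩ := h
  let φ : (⊤ : SimpleGraph V) ≃g (⊤ : SimpleGraph W) := Iso.completeGraph f
  have mapf_inj : Function.Injective (Sym2.map f) := Sym2.map.injective f.injective
  have mapf_surj (x : Sym2 W) : ∃ e : Sym2 V, x = e.map f :=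
    ⟨x.map f.symm, by rw [Sym2.map_map, f.self_comp_symm, Sym2.map_id, id]⟩
  have mem_edges {i e} : e.map f ∈ ((C i).2.map φ.toHom).edges ↔ e ∈ (C i).2.edges := by
    rw [Walk.edges_map]; exact List.mem_map_of_injective mapf_inj
  have mem_M {e} : e.map f ∈ (M.map φ.toHom).edgeSet ↔ e ∈ M.edgeSet := by
    rw [Subgraph.edgeSet_map]; exact mapf_inj.mem_set_image
  have mem_T {i x} : f x ∈ (T i).map f ↔ x ∈ T i := by
    rw [Sym2.mem_map]; simp
  refine ⟨fun i => ⟨φ (C i).1, (C i).2.map φ.toHom⟩, M.map φ.toHom, fun i => (T i).map f,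
    fun i => (hC i).map φ.bijective, ?_, ?_, ?_, ?_, fun i => mem_edges.2 (hTC i), ?_, ?_, ?_⟩
  · exact ⟨(Subgraph.Iso.isMatching_map φ).2 hM.1,
      fun w => ⟨f.symm w, hM.2 _, f.apply_symm_apply w⟩⟩
  · intro i j hij x
    obtain ⟨e, rfl⟩ := mapf_surj x
    rw [mem_edges, mem_edges]
    exact hCC i j hij e
  · intro i x
    obtain ⟨e, rfl⟩ := mapf_surj x
    rw [mem_edges, mem_M]
    exact hCM i e
  · intro x hx
    obtain ⟨e, rfl⟩ := mapf_surj x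
    simp only [mem_edges, mem_M]
    exact hcover e (by simpa [Sym2.isDiag_map f.injective] using hx)
  · rintro i x hx ⟨j, rfl⟩
    rw [mem_edges] at hx
    exact congrArg (Sym2.map f) (hTuniq i _ hx ⟨j, rfl⟩)
  · intro i
    rw [mem_M]
    exact hTM i
  · intro i j hij x
    obtain ⟨v, rfl⟩ := f.surjective x
    rw [mem_T, mem_T]
    exact hTT i j hij v

namespace SimpleGraph

variable {V : Type*}

def walkOfFn (f : ℕ → V) :
    (L : ℕ) → (∀ t < L, f t ≠ f (t + 1)) → (⊤ : SimpleGraph V).Walk (f 0) (f L)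
  | 0, _ => .nil
  | L + 1, h => .cons (h 0 L.succ_pos)
      (walkOfFn (fun t => f (t + 1)) L fun t ht => h (t + 1) (Nat.succ_lt_succ ht))

lemma support_walkOfFn (f : ℕ → V) (L : ℕ) (h : ∀ t < L, f t ≠ f (t + 1)) :
    (walkOfFn f L h).support = (List.range (L + 1)).map f := by
  induction L generalizing f with
  | zero => rfl
  | succ L ih => simp [walkOfFn, ih, List.range_succ_eq_map (n := L + 1)]

lemma edges_walkOfFn (f : ℕ → V) (L : ℕ) (h : ∀ t < L, f t ≠ f (t + 1)) :
    (walkOfFn f L h).edges = (List.range L).map fun t => s(f t, f (t + 1)) := by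
  induction L generalizing f with
  | zero => rfl
  | succ L ih => simp [walkOfFn, ih, List.range_succ_eq_map (n := L)]

lemma length_walkOfFn (f : ℕ → V) (L : ℕ) (h : ∀ t < L, f t ≠ f (t + 1)) :
    (walkOfFn f L h).length = L := by
  induction L generalizing f with
  | zero => rfl
  | succ L ih => simp [walkOfFn, ih]

end SimpleGraph

section OneFactorization

variable {R : Type*} [CommRing R]

/-- `none` plays the role of `∞`. -/
def sumWeight : Option R → Option R → R
  | some a, some b => a + b
  | some a, none => 2 * a
  | none, some b => 2 * b
  | none, none => 0

lemma sumWeight_comm (v w : Option R) : sumWeight v w = sumWeight w v := by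
  cases v <;> cases w <;> simp [sumWeight, add_comm]

def edgeColor : Sym2 (Option R) → R := Sym2.lift ⟨sumWeight, sumWeight_comm⟩

@[simp] lemma edgeColor_mk (v w : Option R) : edgeColor s(v, w) = sumWeight v w := rfl

variable [Invertible (2 : R)]

lemma eq_of_edgeColor_eq {v w w' : Option R} (hw : v ≠ w) (hw' : v ≠ w')
    (h : edgeColor s(v, w) = edgeColor s(v, w')) : w = w' := by
  have two_mul_inj {a b : R} : 2 * a = 2 * b → a = b := (isUnit_of_invertible 2).mul_left_cancel
  rcases v with _ | a <;> rcases w with _ | b <;> rcases w' with _ | b' <;>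
    simp only [edgeColor_mk, sumWeight, ne_eq, Option.some.injEq, reduceCtorEq, not_true] at *
  · exact two_mul_inj h
  · exact hw' (by linear_combination h)
  · exact hw (by linear_combination -h)
  · exact add_left_cancel h

lemma exists_edgeColor_eq (v : Option R) (s : R) : ∃ w, v ≠ w ∧ edgeColor s(v, w) = s := by
  rcases v with _ | a
  · exact ⟨some (⅟2 * s), by simp, mul_invOf_cancel_left 2 s⟩
  · by_cases h : s - a = a
    · exact ⟨none, by simp, by simp only [edgeColor_mk, sumWeight]; linear_combination -h⟩
    · exact ⟨some (s - a), by simpa [eq_comm] using h, by simp [sumWeight]⟩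

def colorClass (s : R) : (⊤ : SimpleGraph (Option R)).Subgraph where
  verts := Set.univ
  Adj v w := v ≠ w ∧ edgeColor s(v, w) = s
  adj_sub h := h.1
  edge_vert _ := trivial
  symm := ⟨fun _ _ h => ⟨h.1.symm, by rw [Sym2.eq_swap]; exact h.2⟩⟩

omit [Invertible (2 : R)] in
lemma mem_edgeSet_colorClass {s : R} {e : Sym2 (Option R)} :
    e ∈ (colorClass s).edgeSet ↔ ¬e.IsDiag ∧ edgeColor e = s := by
  induction e using Sym2.ind with
  | _ v w => simp [colorClass]

theorem colorClass_isPerfectMatching (s : R) : (colorClass s).IsPerfectMatching := by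
  refine Subgraph.isPerfectMatching_iff.mpr fun v => ?_
  obtain ⟨w, hvw, hw⟩ := exists_edgeColor_eq v s
  exact ⟨w, ⟨hvw, hw⟩, fun w' hw' => eq_of_edgeColor_eq hw'.1 hvw (hw'.2.trans hw.symm)⟩

end OneFactorization

lemma ZMod.natCast_inj_of_lt {n a b : ℕ} (ha : a < n) (hb : b < n) (h : (a : ZMod n) = b) :
    a = b := by
  simpa [ZMod.val_cast_of_lt ha, ZMod.val_cast_of_lt hb] using congrArg ZMod.val h

namespace Walecki

variable {c : ℕ}

instance : Invertible (2 : ZMod (2 * c + 1)) :=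
  invertibleOfRightInverse _ (c + 1 : ℕ) <| by
    have := ZMod.natCast_self (2 * c + 1)
    push_cast at this ⊢
    linear_combination this

lemma invOf_two : ⅟(2 : ZMod (2 * c + 1)) = (c + 1 : ℕ) := rfl

/-- `0, 1, -1, 2, -2, 3, …` -/
def zigzag (t : ℕ) : ℤ := if t % 2 = 0 then -(t / 2 : ℕ) else (t / 2 + 1 : ℕ)

lemma zigzag_add_zigzag_succ (t : ℕ) : zigzag t + zigzag (t + 1) = ((t + 1) % 2 : ℕ) := by
  unfold zigzag; split_ifs <;> omega

lemma zigzag_injOn {t t' : ℕ} (ht : t ≤ 2 * c) (ht' : t' ≤ 2 * c)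
    (h : (zigzag t : ZMod (2 * c + 1)) = zigzag t') : t = t' := by
  rw [ZMod.intCast_eq_intCast_iff_dvd_sub] at h
  have hlt : |zigzag t' - zigzag t| < (2 * c + 1 : ℕ) := by
    rw [abs_lt]; unfold zigzag; split_ifs <;> omega
  have := Int.eq_zero_of_abs_lt_dvd h hlt
  unfold zigzag at this
  split_ifs at this <;> omega

lemma exists_zigzag_eq (x : ZMod (2 * c + 1)) :
    ∃ t ≤ 2 * c, (zigzag t : ZMod (2 * c + 1)) = x := by
  have hx := x.valMinAbs_mem_Ioc
  refine ⟨(if 0 < x.valMinAbs then 2 * x.valMinAbs - 1 else -2 * x.valMinAbs).toNat, ?_, ?_⟩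
  · simp only [Set.mem_Ioc] at hx; push_cast at hx; split_ifs <;> omega
  · suffices zigzag _ = x.valMinAbs by rw [this, ZMod.coe_valMinAbs]
    simp only [Set.mem_Ioc] at hx; unfold zigzag; split_ifs <;> omega

/-- The vertices `i + zigzag 0, …, i + zigzag (2c), ∞` of Walecki's `i`-th cycle after `∞`. -/
def pathSeq (i : ZMod (2 * c + 1)) (t : ℕ) : Option (ZMod (2 * c + 1)) :=
  if t ≤ 2 * c then some (i + zigzag t) else none

lemma pathSeq_injOn (i : ZMod (2 * c + 1)) {t t' : ℕ} (ht : t ≤ 2 * c + 1)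
    (ht' : t' ≤ 2 * c + 1) (h : pathSeq i t = pathSeq i t') : t = t' := by
  unfold pathSeq at h
  split_ifs at h with h₁ h₂ h₂
  · exact zigzag_injOn h₁ h₂ (add_left_cancel (Option.some_injective _ h))
  all_goals omega

lemma pathSeq_ne_succ (i : ZMod (2 * c + 1)) {t : ℕ} (ht : t < 2 * c + 1) :
    pathSeq i t ≠ pathSeq i (t + 1) :=
  fun h => by have := pathSeq_injOn i (by omega) (by omega) h; omega

lemma edgeColor_pathSeq (i : ZMod (2 * c + 1)) {t : ℕ} (ht : t ≤ 2 * c) :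
    edgeColor s(pathSeq i t, pathSeq i (t + 1)) = 2 * i + ((t + 1) % 2 : ℕ) := by
  rcases ht.lt_or_eq with ht | rfl
  · have := congrArg (Int.cast : ℤ → ZMod (2 * c + 1)) (zigzag_add_zigzag_succ t)
    simp only [pathSeq, edgeColor_mk, if_pos ht.le, if_pos (show t + 1 ≤ 2 * c from ht),
      sumWeight]
    rw [Int.cast_add, Int.cast_natCast] at this
    linear_combination this
  · have hc := ZMod.natCast_self (2 * c + 1)
    have hz : zigzag (2 * c) = -c := by simp [zigzag]
    simp only [pathSeq, le_refl, if_pos, if_neg (show ¬2 * c + 1 ≤ 2 * c by omega), edgeColor_mk,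
      sumWeight, hz, Nat.mul_add_mod]
    push_cast at hc ⊢
    linear_combination -hc

def hamCycle (i : ZMod (2 * c + 1)) :
    (⊤ : SimpleGraph (Option (ZMod (2 * c + 1)))).Walk none none :=
  .cons (by simp [pathSeq])
    ((walkOfFn (pathSeq i) (2 * c + 1) fun _ ht => pathSeq_ne_succ i ht).copy rfl
      (by simp [pathSeq]))

lemma edges_hamCycle (i : ZMod (2 * c + 1)) :
    (hamCycle i).edges = s(none, pathSeq i 0) ::
      (List.range (2 * c + 1)).map fun t => s(pathSeq i t, pathSeq i (t + 1)) := by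
  simp [hamCycle, edges_walkOfFn]

theorem isHamiltonianCycle_hamCycle (hc : 1 ≤ c) (i : ZMod (2 * c + 1)) :
    (hamCycle i).IsHamiltonianCycle := by
  have hlen : (hamCycle i).length = 2 * c + 2 := by simp [hamCycle, length_walkOfFn]
  rw [Walk.isHamiltonianCycle_iff_isCycle_and_length_eq, Walk.isCycle_iff_isPath_tail_and_le_length,
    Walk.isPath_def, Walk.support_tail_of_not_nil _ (by simp [hamCycle]), hlen]
  refine ⟨⟨?_, by omega⟩, by simp⟩
  simp only [hamCycle, Walk.support_cons, Walk.support_copy, support_walkOfFn, List.tail_cons]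
  refine List.Nodup.map_on (fun t ht t' ht' h => ?_) List.nodup_range
  rw [List.mem_range] at ht ht'
  exact pathSeq_injOn i (by omega) (by omega) h

lemma edgeColor_none_pathSeq_zero (i : ZMod (2 * c + 1)) :
    edgeColor s(none, pathSeq i 0) = 2 * i := by
  simp [pathSeq, sumWeight, zigzag]

lemma exists_mem_edges_hamCycle_edgeColor (i : ZMod (2 * c + 1))
    (v : Option (ZMod (2 * c + 1))) {r : ℕ} (hr : r < 2) :
    ∃ e ∈ (hamCycle i).edges, v ∈ e ∧ edgeColor e = 2 * i + r := by
  have mem_edges : ∀ t ≤ 2 * c, s(pathSeq i t, pathSeq i (t + 1)) ∈ (hamCycle i).edges :=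
    fun t ht => by
      rw [edges_hamCycle]
      exact List.mem_cons_of_mem _ (List.mem_map.2 ⟨t, List.mem_range.2 (by omega), rfl⟩)
  rcases v with _ | x
  · interval_cases r
    · exact ⟨s(none, pathSeq i 0), by simp [edges_hamCycle], Sym2.mem_mk_left _ _,
        by simpa using edgeColor_none_pathSeq_zero i⟩
    · refine ⟨_, mem_edges (2 * c) le_rfl, by simp [pathSeq], ?_⟩
      simp [edgeColor_pathSeq i le_rfl]
  · obtain ⟨t, ht, hx⟩ := exists_zigzag_eq (x - i)
    have hxt : some x = pathSeq i t := by simp [pathSeq, ht, hx]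
    -- `pathSeq i t` lies on the edges `t - 1` and `t`, whose colours differ in parity
    by_cases hpar : (t + 1) % 2 = r
    · refine ⟨_, mem_edges t ht, by simp [hxt], ?_⟩
      rw [edgeColor_pathSeq i ht, hpar]
    rcases Nat.eq_zero_or_pos t with rfl | ht0
    · refine ⟨s(none, pathSeq i 0), by simp [edges_hamCycle], by simp [hxt], ?_⟩
      rw [edgeColor_none_pathSeq_zero, show r = 0 by omega]
      simp
    · refine ⟨_, mem_edges (t - 1) (by omega), by simp [hxt, Nat.sub_add_cancel ht0], ?_⟩
      rw [edgeColor_pathSeq i (by omega), show (t - 1 + 1) % 2 = r by omega]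

theorem mem_edges_hamCycle_iff_colorClass (i : ZMod (2 * c + 1))
    {e : Sym2 (Option (ZMod (2 * c + 1)))} :
    e ∈ (hamCycle i).edges ↔ ∃ r < 2, e ∈ (colorClass (2 * i + (r : ℕ))).edgeSet := by
  constructor
  · rw [edges_hamCycle, List.mem_cons, List.mem_map]
    rintro (rfl | ⟨t, ht, rfl⟩)
    · refine ⟨0, two_pos, mem_edgeSet_colorClass.2 ⟨by simp [pathSeq], ?_⟩⟩
      simpa using edgeColor_none_pathSeq_zero i
    · rw [List.mem_range] at ht
      exact ⟨(t + 1) % 2, Nat.mod_lt _ two_pos, pathSeq_ne_succ i ht,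
        edgeColor_pathSeq i (by omega)⟩
  · rintro ⟨r, hr, he⟩
    induction e using Sym2.ind with | _ v w => ?_
    -- the cycle has an edge `{v, w'}` of the same colour, and colour classes are matchings
    obtain ⟨e', he', hv, hcol⟩ := exists_mem_edges_hamCycle_edgeColor i v hr
    obtain ⟨w', rfl⟩ := Sym2.mem_iff_exists.1 hv
    have hvw : v ≠ w := he.1
    rwa [eq_of_edgeColor_eq hvw (Walk.adj_of_mem_edges _ he') (he.2.trans hcol.symm)]

lemma mem_edges_hamCycle_iff_val_div_two {i : ℕ} (hi : i < c)
    {e : Sym2 (Option (ZMod (2 * c + 1)))} :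
    e ∈ (hamCycle (i : ZMod (2 * c + 1))).edges ↔ ¬e.IsDiag ∧ (edgeColor e).val / 2 = i := by
  simp only [mem_edges_hamCycle_iff_colorClass, mem_edgeSet_colorClass]
  constructor
  · rintro ⟨r, hr, hdiag, hcol⟩
    refine ⟨hdiag, ?_⟩
    rw [hcol, show 2 * (i : ZMod (2 * c + 1)) + (r : ℕ) = (2 * i + r : ℕ) by push_cast; ring,
      ZMod.val_cast_of_lt (by omega)]
    omega
  · rintro ⟨hdiag, hcol⟩
    refine ⟨(edgeColor e).val % 2, Nat.mod_lt _ two_pos, hdiag, ?_⟩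
    conv_lhs =>
      rw [← ZMod.natCast_zmod_val (edgeColor e), ← Nat.div_add_mod (edgeColor e).val 2, hcol]
    push_cast; ring

/-- The edge `{i + 1/4, i + 3/4}`. -/
def transversalEdge (i : ZMod (2 * c + 1)) : Sym2 (Option (ZMod (2 * c + 1))) :=
  s(some (i + ⅟2 * ⅟2), some (i + ⅟2 * ⅟2 + ⅟2))

lemma edgeColor_transversalEdge (i : ZMod (2 * c + 1)) :
    edgeColor (transversalEdge i) = 2 * i + 1 := by
  simp only [transversalEdge, edgeColor_mk, sumWeight]
  linear_combination (⅟2 + 1) * mul_invOf_self (2 : ZMod (2 * c + 1))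

lemma transversalEdge_not_isDiag (hc : 1 ≤ c) (i : ZMod (2 * c + 1)) :
    ¬(transversalEdge i).IsDiag := by
  rw [transversalEdge, Sym2.mk_isDiag_iff, Option.some_inj, left_eq_add, invOf_two]
  exact fun h => by
    simpa using ZMod.natCast_inj_of_lt (by omega) (by omega) (h.trans Nat.cast_zero.symm)

lemma transversalEdge_disjoint {i j : ℕ} (hi : i < c) (hj : j < c) (hij : i ≠ j)
    (x : Option (ZMod (2 * c + 1))) (hxi : x ∈ transversalEdge (i : ZMod (2 * c + 1))) :
    x ∉ transversalEdge (j : ZMod (2 * c + 1)) := by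
  rw [transversalEdge, Sym2.mem_iff] at hxi ⊢
  rintro (rfl | rfl) <;> rcases hxi with h | h <;> simp only [Option.some_inj, invOf_two] at h
  · exact hij (ZMod.natCast_inj_of_lt (n := 2 * c + 1) (by omega) (by omega)
      (by linear_combination -h))
  · have := ZMod.natCast_inj_of_lt (n := 2 * c + 1) (a := j) (b := i + (c + 1))
      (by omega) (by omega) (by push_cast at h ⊢; linear_combination h)
    omega
  · have := ZMod.natCast_inj_of_lt (n := 2 * c + 1) (a := j + (c + 1)) (b := i)
      (by omega) (by omega) (by push_cast at h ⊢; linear_combination h)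
    omega
  · exact hij (ZMod.natCast_inj_of_lt (n := 2 * c + 1) (by omega) (by omega)
      (by linear_combination -h))

lemma transversalEdge_mem_edges_hamCycle {i : ℕ} (hi : i < c) :
    transversalEdge (i : ZMod (2 * c + 1)) ∈ (hamCycle (i : ZMod (2 * c + 1))).edges := by
  refine (mem_edges_hamCycle_iff_val_div_two hi).2
    ⟨transversalEdge_not_isDiag (by omega) _, ?_⟩
  rw [edgeColor_transversalEdge,
    show 2 * (i : ZMod (2 * c + 1)) + 1 = (2 * i + 1 : ℕ) by push_cast; ring,
    ZMod.val_cast_of_lt (by omega)]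
  omega

lemma mem_edgeSet_colorClass_neg_one {e : Sym2 (Option (ZMod (2 * c + 1)))} :
    e ∈ (colorClass (-1)).edgeSet ↔ ¬e.IsDiag ∧ (edgeColor e).val = 2 * c := by
  have := ZMod.val_neg_one (2 * c)
  rw [mem_edgeSet_colorClass]
  exact and_congr_right' ⟨fun h => h ▸ this, fun h => ZMod.val_injective _ (h.trans this.symm)⟩

theorem hasHamiltonDecompositionWithTransversal (c : ℕ) :
    HasHamiltonDecompositionWithTransversal (Option (ZMod (2 * c + 1))) (Fin c) := by
  have mem_C (i : Fin c) {e : Sym2 (Option (ZMod (2 * c + 1)))} :=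
    mem_edges_hamCycle_iff_val_div_two (e := e) i.isLt
  have T_mem (i : Fin c) := transversalEdge_mem_edges_hamCycle i.isLt
  refine ⟨fun i => ⟨none, hamCycle ((i : ℕ) : ZMod (2 * c + 1))⟩, colorClass (-1),
    fun i => transversalEdge ((i : ℕ) : ZMod (2 * c + 1)),
    fun i => isHamiltonianCycle_hamCycle i.pos _, colorClass_isPerfectMatching _,
    ?_, ?_, ?_, T_mem, ?_, ?_, ?_⟩
  · intro i j hij e hi hj
    exact hij (Fin.ext (((mem_C i).1 hi).2.symm.trans ((mem_C j).1 hj).2))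
  · intro i e hi hM
    have := ((mem_C i).1 hi).2
    have := (mem_edgeSet_colorClass_neg_one.1 hM).2
    omega
  · intro e he
    have hdiag : ¬e.IsDiag := by simpa [edgeSet_top] using he
    have hlt := ZMod.val_lt (edgeColor e)
    by_cases h : (edgeColor e).val = 2 * c
    · exact Or.inr (mem_edgeSet_colorClass_neg_one.2 ⟨hdiag, h⟩)
    · exact Or.inl ⟨⟨(edgeColor e).val / 2, by omega⟩,
        (mem_edges_hamCycle_iff_val_div_two (by omega)).2 ⟨hdiag, rfl⟩⟩
  · rintro i e he ⟨j, rfl⟩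
    rw [Fin.ext (((mem_C i).1 he).2.symm.trans ((mem_C j).1 (T_mem j)).2)]
  · intro i hM
    beta_reduce at hM
    have := ((mem_C i).1 (T_mem i)).2
    have := (mem_edgeSet_colorClass_neg_one.1 hM).2
    omega
  · intro i j hij
    exact transversalEdge_disjoint i.isLt j.isLt (Fin.val_injective.ne hij)

end Walecki

theorem stmt5_general (k : ℕ) (hko : Odd k) :
    ∃ (c : Fin ((k - 1) / 2) → Σ v : Fin (k + 1), (⊤ : SimpleGraph (Fin (k + 1))).Walk v v)
      (M : (⊤ : SimpleGraph (Fin (k + 1))).Subgraph)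
      (T : Fin ((k - 1) / 2) → Sym2 (Fin (k + 1))),
      (∀ i, (c i).2.IsHamiltonianCycle) ∧
      M.IsPerfectMatching ∧
      (∀ i j, i ≠ j → ∀ e, e ∈ (c i).2.edges → e ∉ (c j).2.edges) ∧
      (∀ i, ∀ e ∈ (c i).2.edges, e ∉ M.edgeSet) ∧
      (∀ e ∈ (⊤ : SimpleGraph (Fin (k + 1))).edgeSet,
        (∃ i, e ∈ (c i).2.edges) ∨ e ∈ M.edgeSet) ∧
      -- the transversal: one edge from each Hamilton cycle
      (∀ i, T i ∈ (c i).2.edges) ∧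
      (∀ i, ∀ e ∈ (c i).2.edges, (∃ j, e = T j) → e = T i) ∧
      -- it contains no edge of the perfect matching
      (∀ i, T i ∉ M.edgeSet) ∧
      -- it is a matching: pairwise vertex-disjoint edges
      (∀ i j, i ≠ j → ∀ x : Fin (k + 1), x ∈ T i → x ∉ T j) := by
  obtain ⟨c, rfl⟩ := hko
  rw [show (2 * c + 1 - 1) / 2 = c by omega]
  exact (Walecki.hasHamiltonDecompositionWithTransversal c).of_equiv
    (Fintype.equivFinOfCardEq (by simp))

/-- Every complete graph `K_{k+1}` with `k` odd admits a decomposition of its edge set into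
`(k-1)/2` edge-disjoint Hamilton cycles and one perfect matching, together with a matching
containing one edge from each Hamilton cycle (and no edge of the perfect matching). -/
theorem stmt5 (k : ℕ) (hk : 1 ≤ k) (hko : Odd k) :
    ∃ (c : Fin ((k - 1) / 2) → Σ v : Fin (k + 1), (⊤ : SimpleGraph (Fin (k + 1))).Walk v v)
      (M : (⊤ : SimpleGraph (Fin (k + 1))).Subgraph)
      (T : Fin ((k - 1) / 2) → Sym2 (Fin (k + 1))),
      (∀ i, (c i).2.IsHamiltonianCycle) ∧
      M.IsPerfectMatching ∧
      (∀ i j, i ≠ j → ∀ e, e ∈ (c i).2.edges → e ∉ (c j).2.edges) ∧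
      (∀ i, ∀ e ∈ (c i).2.edges, e ∉ M.edgeSet) ∧
      (∀ e ∈ (⊤ : SimpleGraph (Fin (k + 1))).edgeSet,
        (∃ i, e ∈ (c i).2.edges) ∨ e ∈ M.edgeSet) ∧
      -- the transversal: one edge from each Hamilton cycle
      (∀ i, T i ∈ (c i).2.edges) ∧
      (∀ i, ∀ e ∈ (c i).2.edges, (∃ j, e = T j) → e = T i) ∧
      -- it contains no edge of the perfect matching
      (∀ i, T i ∉ M.edgeSet) ∧
      -- it is a matching: pairwise vertex-disjoint edges
      (∀ i j, i ≠ j → ∀ x : Fin (k + 1), x ∈ T i → x ∉ T j) :=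
  stmt5_general k hko
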